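/- Let n ≥ 1 and c ∈ Mat_n. Suppose u : ℝ × ℝ → Mat_n is a smooth function of (t, x) satisfying the matrix mKdV-type equation u_t = u_{xxx} + 3[u, u_{xx}] − 6 u u_x u − 3(u_x + u²) c − 3 c (u_x − u²) at every point. For λ ∈ ℂ define the 2×2 block matrices (with n×n blocks) U(λ;t,x) = [[0, I], [c − λ·I, −2u]] and V(λ;t,x) = 2·[[2u(c − λ·I), −u_x − u² − c − 2λ·I], [(u_x − u² − c − 2λ·I)(c − λ·I), 2λ·u − u_{xx} − [u, u_x] + 2u³ + 2cu + 2uc]]. Then the zero curvature equation U_t = V_x + V U − U V holds at every point (t,x) and for every λ ∈ ℂ. -/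

import Mathlib

attribute [local instance] Matrix.normedAddCommGroup Matrix.normedSpace

/-- Partial derivative in the first (time) variable. -/
noncomputable def partialT {M : Type*} [NormedAddCommGroup M] [NormedSpace ℝ M]
    (F : ℝ × ℝ → M) (p : ℝ × ℝ) : M :=
  deriv (fun s => F (s, p.2)) p.1

/-- Partial derivative in the second (space) variable. -/
noncomputable def partialX {M : Type*} [NormedAddCommGroup M] [NormedSpace ℝ M]
    (F : ℝ × ℝ → M) (p : ℝ × ℝ) : M :=
  deriv (fun s => F (p.1, s)) p.2

/-- `U(λ;t,x) = [[0, I], [c − λI, −2u]]`. -/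
noncomputable def UlaxMkdv (n : ℕ) (c : Matrix (Fin n) (Fin n) ℂ)
    (u : ℝ × ℝ → Matrix (Fin n) (Fin n) ℂ) (l : ℂ) (w : ℝ × ℝ) :
    Matrix (Fin n ⊕ Fin n) (Fin n ⊕ Fin n) ℂ :=
  Matrix.fromBlocks 0 1 (c - l • 1) (-(2 * u w))

/-- `V(λ;t,x)`, the second matrix of the zero curvature representation of the
matrix mKdV-type equation. -/
noncomputable def VlaxMkdv (n : ℕ) (c : Matrix (Fin n) (Fin n) ℂ)
    (u : ℝ × ℝ → Matrix (Fin n) (Fin n) ℂ) (l : ℂ) (w : ℝ × ℝ) :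
    Matrix (Fin n ⊕ Fin n) (Fin n ⊕ Fin n) ℂ :=
  (2 : ℂ) • Matrix.fromBlocks
    (2 * (u w * (c - l • 1)))
    (-(partialX u w) - (u w)^2 - c - (2 * l) • 1)
    ((partialX u w - (u w)^2 - c - (2 * l) • 1) * (c - l • 1))
    ((2 * l) • u w - partialX (partialX u) w
      - (u w * partialX u w - partialX u w * u w)
      + 2 * (u w)^3 + 2 * (c * u w) + 2 * (u w * c))

section Tools

variable {n : ℕ}

/-- Matrix multiplication as a continuous bilinear map (for the sup norm). -/
noncomputable def mulCLM (n : ℕ) :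
    Matrix (Fin n) (Fin n) ℂ →L[ℝ] Matrix (Fin n) (Fin n) ℂ →L[ℝ] Matrix (Fin n) (Fin n) ℂ :=
  LinearMap.toContinuousLinearMap
  { toFun := fun X => LinearMap.toContinuousLinearMap (LinearMap.mulLeft ℝ X)
    map_add' := by intro X Y; ext Z; simp [add_mul]
    map_smul' := by intro r X; ext Z; simp [smul_mul_assoc] }

noncomputable instance matCLMNormedAddCommGroup :
    NormedAddCommGroup (Matrix (Fin n) (Fin n) ℂ →L[ℝ] Matrix (Fin n) (Fin n) ℂ) := by
  exact ContinuousLinearMap.toNormedAddCommGroup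

noncomputable instance matCLMNormedSpace :
    NormedSpace ℝ (Matrix (Fin n) (Fin n) ℂ →L[ℝ] Matrix (Fin n) (Fin n) ℂ) := by
  exact ContinuousLinearMap.toNormedSpace

@[simp] theorem mulCLM_apply (X Y : Matrix (Fin n) (Fin n) ℂ) : mulCLM n X Y = X * Y := by
  simp [mulCLM]

theorem HasDerivAt.matmul {f g : ℝ → Matrix (Fin n) (Fin n) ℂ} {f' g' : Matrix (Fin n) (Fin n) ℂ}
    {t : ℝ} (hf : HasDerivAt f f' t) (hg : HasDerivAt g g' t) :
    HasDerivAt (fun s => f s * g s) (f' * g t + f t * g') t := by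
  have h := ((mulCLM n).hasFDerivAt.comp_hasDerivAt t hf).clm_apply hg
  have e1 : (fun s => f s * g s) = fun y => mulCLM n (f y) (g y) := by funext y; simp
  rw [e1, ← mulCLM_apply f', ← mulCLM_apply (f t)]
  exact h

theorem hasDerivAt_lineX (p : ℝ × ℝ) (s : ℝ) :
    HasDerivAt (fun s : ℝ => ((p.1, s) : ℝ × ℝ)) (0, 1) s :=
  HasDerivAt.prodMk (hasDerivAt_const _ _) (hasDerivAt_id _)

variable {F : ℝ × ℝ → Matrix (Fin n) (Fin n) ℂ}

theorem hasDerivAt_partialX (hF : ContDiff ℝ (⊤ : ℕ∞) F) (p : ℝ × ℝ) :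
    HasDerivAt (fun s => F (p.1, s)) (partialX F p) p.2 := by
  have h : HasDerivAt (fun s => F (p.1, s)) (fderiv ℝ F p (0, 1)) p.2 := by
    have := ((hF.differentiable (by simp)) (p.1, p.2)).hasFDerivAt.comp_hasDerivAt p.2
      (hasDerivAt_lineX p p.2)
    exact this
  rwa [partialX, h.deriv]

theorem partialX_eq (hF : ContDiff ℝ (⊤ : ℕ∞) F) (p : ℝ × ℝ) :
    partialX F p = fderiv ℝ F p (0, 1) := by
  have := ((hF.differentiable (by simp)) (p.1, p.2)).hasFDerivAt.comp_hasDerivAt p.2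
      (hasDerivAt_lineX p p.2)
  simp only [Prod.mk.eta] at this
  exact this.deriv

theorem hasDerivAt_partialT (hF : ContDiff ℝ (⊤ : ℕ∞) F) (p : ℝ × ℝ) :
    HasDerivAt (fun s => F (s, p.2)) (partialT F p) p.1 := by
  have h : HasDerivAt (fun s => F (s, p.2)) (fderiv ℝ F p (1, 0)) p.1 := by
    have := ((hF.differentiable (by simp)) (p.1, p.2)).hasFDerivAt.comp_hasDerivAt p.1
      (HasDerivAt.prodMk (hasDerivAt_id p.1) (hasDerivAt_const p.1 p.2))
    exact this
  rwa [partialT, h.deriv]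

theorem contDiff_partialX (hF : ContDiff ℝ (⊤ : ℕ∞) F) : ContDiff ℝ (⊤ : ℕ∞) (partialX F) := by
  have h : partialX F = fun p => (ContinuousLinearMap.apply ℝ (Matrix (Fin n) (Fin n) ℂ)
      (((0 : ℝ), (1 : ℝ)) : ℝ × ℝ)) (fderiv ℝ F p) := by
    funext p; simp [partialX_eq hF p]; rfl
  rw [h]
  exact (ContinuousLinearMap.apply ℝ _ _).contDiff.comp (hF.fderiv_right (m := ((⊤ : ℕ∞) : WithTop ℕ∞)) (by exact_mod_cast le_top))

noncomputable def e11CLM (n : ℕ) : Matrix (Fin n) (Fin n) ℂ →L[ℝ]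
    Matrix (Fin n ⊕ Fin n) (Fin n ⊕ Fin n) ℂ :=
  LinearMap.toContinuousLinearMap
  { toFun := fun X => Matrix.fromBlocks X 0 0 0
    map_add' := by intro X Y; rw [Matrix.fromBlocks_add]; simp
    map_smul' := by intro r X; rw [Matrix.fromBlocks_smul]; simp }

noncomputable def e12CLM (n : ℕ) : Matrix (Fin n) (Fin n) ℂ →L[ℝ]
    Matrix (Fin n ⊕ Fin n) (Fin n ⊕ Fin n) ℂ :=
  LinearMap.toContinuousLinearMap
  { toFun := fun X => Matrix.fromBlocks 0 X 0 0
    map_add' := by intro X Y; rw [Matrix.fromBlocks_add]; simp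
    map_smul' := by intro r X; rw [Matrix.fromBlocks_smul]; simp }

noncomputable def e21CLM (n : ℕ) : Matrix (Fin n) (Fin n) ℂ →L[ℝ]
    Matrix (Fin n ⊕ Fin n) (Fin n ⊕ Fin n) ℂ :=
  LinearMap.toContinuousLinearMap
  { toFun := fun X => Matrix.fromBlocks 0 0 X 0
    map_add' := by intro X Y; rw [Matrix.fromBlocks_add]; simp
    map_smul' := by intro r X; rw [Matrix.fromBlocks_smul]; simp }

noncomputable def e22CLM (n : ℕ) : Matrix (Fin n) (Fin n) ℂ →L[ℝ]
    Matrix (Fin n ⊕ Fin n) (Fin n ⊕ Fin n) ℂ :=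
  LinearMap.toContinuousLinearMap
  { toFun := fun X => Matrix.fromBlocks 0 0 0 X
    map_add' := by intro X Y; rw [Matrix.fromBlocks_add]; simp
    map_smul' := by intro r X; rw [Matrix.fromBlocks_smul]; simp }

theorem fromBlocks_decomp (A B C D : Matrix (Fin n) (Fin n) ℂ) :
    Matrix.fromBlocks A B C D = e11CLM n A + e12CLM n B + e21CLM n C + e22CLM n D := by
  simp only [e11CLM, e12CLM, e21CLM, e22CLM, LinearMap.coe_toContinuousLinearMap',
    LinearMap.coe_mk, AddHom.coe_mk]
  rw [Matrix.fromBlocks_add, Matrix.fromBlocks_add, Matrix.fromBlocks_add]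
  simp

theorem HasDerivAt.fromBlocks {A B C D : ℝ → Matrix (Fin n) (Fin n) ℂ}
    {A' B' C' D' : Matrix (Fin n) (Fin n) ℂ} {t : ℝ}
    (hA : HasDerivAt A A' t) (hB : HasDerivAt B B' t)
    (hC : HasDerivAt C C' t) (hD : HasDerivAt D D' t) :
    HasDerivAt (fun s => Matrix.fromBlocks (A s) (B s) (C s) (D s))
      (Matrix.fromBlocks A' B' C' D') t := by
  have h := (((((e11CLM n).hasFDerivAt.comp_hasDerivAt t hA).add
    ((e12CLM n).hasFDerivAt.comp_hasDerivAt t hB)).add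
    ((e21CLM n).hasFDerivAt.comp_hasDerivAt t hC)).add
    ((e22CLM n).hasFDerivAt.comp_hasDerivAt t hD))
  simp only [Function.comp_def] at h
  rw [show (fun s => Matrix.fromBlocks (A s) (B s) (C s) (D s)) = fun s => e11CLM n (A s)
    + e12CLM n (B s) + e21CLM n (C s) + e22CLM n (D s) from
    funext fun s => fromBlocks_decomp _ _ _ _, fromBlocks_decomp]
  exact h

theorem mul_numeral_two {R : Type*} [NonAssocRing R] (a : R) : (2 : R) * a = a + a := by
  rw [show (2 : R) = 1 + 1 by norm_num, add_mul, one_mul]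

theorem mul_numeral_three {R : Type*} [NonAssocRing R] (a : R) : (3 : R) * a = a + a + a := by
  rw [show (3 : R) = 1 + 1 + 1 by norm_num, add_mul, add_mul, one_mul]

theorem mul_numeral_six {R : Type*} [NonAssocRing R] (a : R) :
    (6 : R) * a = a + a + a + a + a + a := by
  rw [show (6 : R) = 1 + 1 + 1 + 1 + 1 + 1 by norm_num]
  simp only [add_mul, one_mul]

end Tools

/-- the zero curvature equation `U_t = V_x + [V, U]` holds for the
matrix mKdV-type equation
`u_t = u_xxx + 3[u, u_xx] − 6uu_xu − 3(u_x + u²)c − 3c(u_x − u²)`. -/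
theorem mkdv_zero_curvature (n : ℕ) (hn : 1 ≤ n)
    (c : Matrix (Fin n) (Fin n) ℂ)
    (u : ℝ × ℝ → Matrix (Fin n) (Fin n) ℂ) (hu : ContDiff ℝ (⊤ : ℕ∞) u)
    (hueq : ∀ w : ℝ × ℝ,
      partialT u w = partialX (partialX (partialX u)) w
        + 3 * (u w * partialX (partialX u) w - partialX (partialX u) w * u w)
        - 6 * (u w * partialX u w * u w)
        - 3 * ((partialX u w + (u w)^2) * c)
        - 3 * (c * (partialX u w - (u w)^2))) :
    ∀ (l : ℂ) (w : ℝ × ℝ),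
      partialT (UlaxMkdv n c u l) w =
        partialX (VlaxMkdv n c u l) w
          + VlaxMkdv n c u l w * UlaxMkdv n c u l w
          - UlaxMkdv n c u l w * VlaxMkdv n c u l w := by
  intro l w
  have hux : ContDiff ℝ (⊤ : ℕ∞) (partialX u) := contDiff_partialX hu
  have huxx : ContDiff ℝ (⊤ : ℕ∞) (partialX (partialX u)) := contDiff_partialX hux
  have hDu := hasDerivAt_partialX hu w
  have hDux := hasDerivAt_partialX hux w
  have hDuxx := hasDerivAt_partialX huxx w
  have hDt := hasDerivAt_partialT hu w
  -- derivative of U in t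
  have hU : HasDerivAt (fun s => UlaxMkdv n c u l (s, w.2))
      (Matrix.fromBlocks 0 0 0 (0 * u (w.1, w.2) + -(2 * partialT u w))) w.1 := by
    have h1 : HasDerivAt (fun s => -(2 * u (s, w.2)))
        (0 * u (w.1, w.2) + -(2 * partialT u w)) w.1 := by
      have h := ((hasDerivAt_const w.1 ((2 : Matrix (Fin n) (Fin n) ℂ))).matmul hDt).neg
      rw [show (0 * u (w.1, w.2) + -(2 * partialT u w))
        = -(0 * u (w.1, w.2) + 2 * partialT u w) by simp]
      exact h
    exact (hasDerivAt_const _ _).fromBlocks (hasDerivAt_const _ _) (hasDerivAt_const _ _) h1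
  -- derivative of V in x
  have h2sq : HasDerivAt (fun s => (u (w.1, s))^2)
      (partialX u w * u (w.1, w.2) + u (w.1, w.2) * partialX u w) w.2 := by
    simpa [pow_two] using hDu.matmul hDu
  have h3cu : HasDerivAt (fun s => (u (w.1, s))^3)
      ((partialX u w * u (w.1, w.2) + u (w.1, w.2) * partialX u w) * u (w.1, w.2)
        + u (w.1, w.2) * u (w.1, w.2) * partialX u w) w.2 := by
    have h := (hDu.matmul hDu).matmul hDu
    simpa [pow_succ, pow_two] using h
  have hA : HasDerivAt (fun s => 2 * (u (w.1, s) * (c - l • 1)))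
      (0 * (u (w.1, w.2) * (c - l • 1))
        + 2 * (partialX u w * (c - l • 1) + u (w.1, w.2) * 0)) w.2 :=
    (hasDerivAt_const w.2 (2 : Matrix (Fin n) (Fin n) ℂ)).matmul
      (hDu.matmul (hasDerivAt_const w.2 (c - l • (1 : Matrix (Fin n) (Fin n) ℂ))))
  have hB : HasDerivAt (fun s => -(partialX u (w.1, s)) - (u (w.1, s))^2 - c - (2 * l) • 1)
      (-(partialX (partialX u) w)
        - (partialX u w * u (w.1, w.2) + u (w.1, w.2) * partialX u w) - 0 - 0) w.2 :=
    ((hDux.neg.sub h2sq).sub (hasDerivAt_const _ _)).sub (hasDerivAt_const _ _)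
  have hC : HasDerivAt (fun s => (partialX u (w.1, s) - (u (w.1, s))^2 - c - (2 * l) • 1)
        * (c - l • 1))
      ((partialX (partialX u) w
          - (partialX u w * u (w.1, w.2) + u (w.1, w.2) * partialX u w) - 0 - 0) * (c - l • 1)
        + (partialX u (w.1, w.2) - (u (w.1, w.2))^2 - c - (2 * l) • 1) * 0) w.2 :=
    (((hDux.sub h2sq).sub (hasDerivAt_const _ _)).sub (hasDerivAt_const _ _)).matmul
      (hasDerivAt_const _ _)
  have h1 := (hDu.const_smul (2 * l)).sub hDuxx
  have h2 := h1.sub ((hDu.matmul hDux).sub (hDux.matmul hDu))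
  have h3 := h2.add ((hasDerivAt_const w.2 (2 : Matrix (Fin n) (Fin n) ℂ)).matmul h3cu)
  have h4 := h3.add ((hasDerivAt_const w.2 (2 : Matrix (Fin n) (Fin n) ℂ)).matmul
    ((hasDerivAt_const w.2 c).matmul hDu))
  have hD := h4.add ((hasDerivAt_const w.2 (2 : Matrix (Fin n) (Fin n) ℂ)).matmul
    (hDu.matmul (hasDerivAt_const w.2 c)))
  have hV := ((hA.fromBlocks hB hC hD).const_smul (2 : ℂ))
  have hVd : partialX (VlaxMkdv n c u l) w = _ := hV.deriv
  have hUd : partialT (UlaxMkdv n c u l) w = _ := hU.deriv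
  rw [hUd, hVd]
  simp only [UlaxMkdv, VlaxMkdv, Prod.mk.eta]
  rw [hueq w]
  simp only [Matrix.smul_mul, Matrix.mul_smul, Matrix.fromBlocks_multiply,
    Matrix.fromBlocks_smul, smul_sub, smul_add, Matrix.fromBlocks_neg, sub_eq_add_neg,
    Matrix.fromBlocks_add]
  rw [Matrix.fromBlocks_inj]
  refine ⟨?_, ?_, ?_, ?_⟩ <;>
  · simp only [mul_numeral_six, mul_numeral_three, mul_numeral_two, pow_succ, pow_zero,
      one_mul, mul_one, zero_mul, mul_zero, neg_mul, mul_neg, neg_neg, add_zero, zero_add,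
      neg_zero, mul_add, add_mul, mul_sub, sub_mul, smul_mul_assoc, mul_smul_comm,
      smul_smul, mul_assoc, smul_add, smul_sub, smul_neg]
    module
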